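/- For every y ∈ (0, 2π), one has cot(y/2)/(4·sin²(y/2)) < 2/y³; equivalently, the third derivative of f(y) = log( sin(y/2)/(y/2) ) is strictly negative on (0, 2π). -/

import Mathlib

/-!
With `t = y / 2` the inequality reads `t³ cos t < sin³ t` on `(0, π)`. Writing
`cos t = 1 - 2 sin² (t / 2)` and bounding both sines below by `x - x³ / 6`, it reduces to the
polynomial inequality `t⁷ (144 - 13 t²) > 0`, valid since `t² < π² < 144 / 13`.
The third derivative of `log (sin (y / 2) / (y / 2))` is exactly the difference of the two
sides of the inequality.
-/

open Real Set

theorem Real.pow_three_mul_cos_lt_sin_pow_three {t : ℝ} (ht₀ : 0 < t) (htπ : t ≤ π) :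
    t ^ 3 * cos t < sin t ^ 3 := by
  have ht_sq : t ^ 2 < 10 := by nlinarith [pi_lt_d2]
  set s := t / 2 - (t / 2) ^ 3 / 6 with hs_def
  have hs : 0 ≤ s := by nlinarith
  have hcos : cos t ≤ 1 - 2 * s ^ 2 := by
    have hsin_half : s ^ 2 ≤ sin (t / 2) ^ 2 :=
      pow_le_pow_left₀ hs (sin_ge_sub_cube (by positivity)) 2
    have := cos_two_mul_eq_one_sub (t / 2)
    rw [mul_div_cancel₀ t two_ne_zero] at this
    linarith
  have hpoly : t ^ 3 * (1 - 2 * s ^ 2) < (t - t ^ 3 / 6) ^ 3 := by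
    have : 0 < t ^ 7 * (144 - 13 * t ^ 2) := by
      have : 0 < 144 - 13 * t ^ 2 := by linarith
      positivity
    linear_combination this / 3456
  calc t ^ 3 * cos t ≤ t ^ 3 * (1 - 2 * s ^ 2) := by gcongr
    _ < (t - t ^ 3 / 6) ^ 3 := hpoly
    _ ≤ sin t ^ 3 := (Odd.pow_le_pow (by decide)).2 (sin_ge_sub_cube ht₀.le)

theorem cos_half_div_sin_half_div_four_mul_sin_half_sq_lt {y : ℝ} (hy₀ : 0 < y)
    (hy : y < 2 * π) :
    cos (y / 2) / sin (y / 2) / (4 * sin (y / 2) ^ 2) < 2 / y ^ 3 := by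
  have hs : 0 < sin (y / 2) := sin_pos_of_pos_of_lt_pi (by positivity) (by linarith)
  have := pow_three_mul_cos_lt_sin_pow_three (t := y / 2) (by positivity) (by linarith)
  rw [div_div, div_lt_div_iff₀ (by positivity) (by positivity)]
  linarith

theorem Set.EqOn.iteratedDeriv_succ_of_hasDerivAt {𝕜 F : Type*} [NontriviallyNormedField 𝕜]
    [NormedAddCommGroup F] [NormedSpace 𝕜 F] {f g g' : 𝕜 → F} {s : Set 𝕜} {n : ℕ}
    (hs : IsOpen s) (hf : EqOn (iteratedDeriv n f) g s) (hg : ∀ x ∈ s, HasDerivAt g (g' x) x) :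
    EqOn (iteratedDeriv (n + 1) f) g' s := fun x hx => by
  rw [iteratedDeriv_succ, hf.deriv hs hx, (hg x hx).deriv]

theorem hasDerivAt_sin_half (z : ℝ) : HasDerivAt (fun w => sin (w / 2)) (cos (z / 2) / 2) z :=
  ((hasDerivAt_id' z).div_const 2).sin.congr_deriv (by ring)

theorem hasDerivAt_cos_half (z : ℝ) : HasDerivAt (fun w => cos (w / 2)) (-sin (z / 2) / 2) z :=
  ((hasDerivAt_id' z).div_const 2).cos.congr_deriv (by ring)

section HalfAngleDerivatives

variable {z : ℝ}

theorem hasDerivAt_log_sin_half_div_half (hz : z ≠ 0) (hs : sin (z / 2) ≠ 0) :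
    HasDerivAt (fun w => log (sin (w / 2) / (w / 2)))
      (cos (z / 2) / sin (z / 2) / 2 - z⁻¹) z := by
  refine (((hasDerivAt_sin_half z).div ((hasDerivAt_id' z).div_const 2) (by simpa)).log
    (div_ne_zero hs (by simpa))).congr_deriv ?_
  simp only [Pi.div_apply]
  field_simp

theorem hasDerivAt_cos_half_div_sin_half_div_two_sub_inv (hz : z ≠ 0) (hs : sin (z / 2) ≠ 0) :
    HasDerivAt (fun w => cos (w / 2) / sin (w / 2) / 2 - w⁻¹)
      ((z ^ 2)⁻¹ - (4 * sin (z / 2) ^ 2)⁻¹) z := by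
  refine ((((hasDerivAt_cos_half z).div (hasDerivAt_sin_half z) hs).div_const 2).sub
    (hasDerivAt_inv hz)).congr_deriv ?_
  field_simp
  linear_combination -4 * z ^ 2 * sin_sq_add_cos_sq (z / 2)

theorem hasDerivAt_inv_sq_sub_inv_four_mul_sin_half_sq (hz : z ≠ 0) (hs : sin (z / 2) ≠ 0) :
    HasDerivAt (fun w => (w ^ 2)⁻¹ - (4 * sin (w / 2) ^ 2)⁻¹)
      (cos (z / 2) / sin (z / 2) / (4 * sin (z / 2) ^ 2) - 2 / z ^ 3) z := by
  refine (((hasDerivAt_pow 2 z).inv (by positivity)).sub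
    ((((hasDerivAt_sin_half z).pow 2).const_mul 4).inv (by simp [hs]))).congr_deriv ?_
  simp only [Pi.pow_apply]
  field_simp
  ring

end HalfAngleDerivatives

theorem eqOn_iteratedDeriv_three_log_sin_half_div_half :
    EqOn (iteratedDeriv 3 fun z => log (sin (z / 2) / (z / 2)))
      (fun z => cos (z / 2) / sin (z / 2) / (4 * sin (z / 2) ^ 2) - 2 / z ^ 3)
      (Ioo 0 (2 * π)) := by
  have hs : ∀ z ∈ Ioo 0 (2 * π), z ≠ 0 ∧ sin (z / 2) ≠ 0 := fun z hz =>
    ⟨hz.1.ne', (sin_pos_of_pos_of_lt_pi (by linarith [hz.1]) (by linarith [hz.2])).ne'⟩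
  have h₀ : EqOn (iteratedDeriv 0 fun z => log (sin (z / 2) / (z / 2)))
      (fun z => log (sin (z / 2) / (z / 2))) (Ioo 0 (2 * π)) := by
    rw [iteratedDeriv_zero]
    exact eqOn_refl _ _
  have h₁ := h₀.iteratedDeriv_succ_of_hasDerivAt isOpen_Ioo fun z hz =>
    hasDerivAt_log_sin_half_div_half (hs z hz).1 (hs z hz).2
  have h₂ := h₁.iteratedDeriv_succ_of_hasDerivAt isOpen_Ioo fun z hz =>
    hasDerivAt_cos_half_div_sin_half_div_two_sub_inv (hs z hz).1 (hs z hz).2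
  exact h₂.iteratedDeriv_succ_of_hasDerivAt isOpen_Ioo fun z hz =>
    hasDerivAt_inv_sq_sub_inv_four_mul_sin_half_sq (hs z hz).1 (hs z hz).2

theorem stmt_19 (y : ℝ) (hy : y ∈ Set.Ioo 0 (2 * Real.pi)) :
    Real.cos (y / 2) / Real.sin (y / 2) / (4 * Real.sin (y / 2) ^ 2) < 2 / y ^ 3 ∧
    iteratedDeriv 3 (fun z : ℝ => Real.log (Real.sin (z / 2) / (z / 2))) y < 0 := by
  have hlt := cos_half_div_sin_half_div_four_mul_sin_half_sq_lt hy.1 hy.2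
  exact ⟨hlt, eqOn_iteratedDeriv_three_log_sin_half_div_half hy ▸ sub_neg.2 hlt⟩
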